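/- Let p ≥ 1 be an integer. Every graph G that is (p+2)K₂-free and (pK₂ ∪ D)-free, where D is the diamond graph (K₄ with one edge removed), satisfies χ(G) ≤ C(ω(G)+2p, 2p+1) + C(ω(G)+2p−3, 2p−1), where C(a,b) denotes the binomial coefficient. -/

import Mathlib

/-!
Induction on `p`. Fix a maximum clique `v₀, …, v_{ω-1}`. For each `w`, the vertices adjacent to
every `v_k` with `k ≠ w` form an independent set, by maximality. Every other vertex has two
smallest non-neighbour indices `i < j`: it lies in the common non-neighbourhood of the edge
`v_i v_j`, where an induced `(p+1)K₂` or `(p-1)K₂ ∪ D` would extend by that edge to an induced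
`(p+2)K₂` or `pK₂ ∪ D` of `G`; and it is complete to the `j - 1` vertices `v_k` with `k < j`,
`k ≠ i`, so the class of such vertices has clique number at most `ω - j + 1`. Colouring each
class by induction gives `χ ≤ ω + ∑_{j<ω} j · b(ω - j + 1)`, where `b` is the bound for
`p - 1`, and the hockey-stick identity turns this into the binomial bound.

The base case `p = 0` is `χ ≤ max ω 3` for `(2K₂, diamond)`-free graphs. If `ω ≥ 3`, a
vertex outside a maximum clique `K` has at most one neighbour in `K` (else a diamond appears);
colouring it like the cyclic successor of that neighbour is proper by `2K₂`-freeness.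
-/

open SimpleGraph

/-- `pK₂`: the disjoint union of `p` copies of the single-edge graph `K₂`. -/
def pK2 (p : ℕ) : SimpleGraph (Fin p × Fin 2) where
  Adj x y := x.1 = y.1 ∧ x.2 ≠ y.2
  symm := ⟨fun _ _ h => ⟨h.1.symm, h.2.symm⟩⟩
  loopless := ⟨fun _ h => h.2 rfl⟩

/-- The diamond graph: `K₄` with one edge removed. -/
def diamond : SimpleGraph (Fin 4) := (⊤ : SimpleGraph (Fin 4)).deleteEdges {s(0, 1)}

open Finset

/-- The bound on `χ` for `(p+2)K₂`- and `(pK₂ ∪ D)`-free graphs of clique number `m`; the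
binomial formula of the theorem only holds from `p = 1` on. -/
def chromaticBound : ℕ → ℕ → ℕ
  | 0, m => max m 3
  | p + 1, m =>
    (m + 2 * (p + 1)).choose (2 * (p + 1) + 1) + (m + 2 * (p + 1) - 3).choose (2 * (p + 1) - 1)

lemma chromaticBound_one (m : ℕ) : chromaticBound 1 m = (m + 2).choose 3 + (m - 1) := by
  simp [chromaticBound]

lemma chromaticBound_succ_succ (q m : ℕ) :
    chromaticBound (q + 2) m =
      (m + 2 * q + 4).choose (2 * q + 5) + (m + 2 * q + 1).choose (2 * q + 3) := by
  simp only [chromaticBound]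
  congr 2

lemma chromaticBound_mono (p : ℕ) : Monotone (chromaticBound p) := by
  intro m m' h
  match p with
  | 0 => exact max_le_max_right 3 h
  | p + 1 =>
    exact add_le_add (Nat.choose_le_choose _ (by omega)) (Nat.choose_le_choose _ (by omega))

lemma sum_range_add_choose' (n k : ℕ) :
    ∑ j ∈ range n, (j + k).choose k = (n + k).choose (k + 1) := by
  induction n with
  | zero => simp
  | succ n ih => rw [sum_range_succ, ih, add_right_comm, Nat.choose_succ_succ', add_comm]

lemma sum_range_chromaticBound_zero {n : ℕ} (hn : 1 ≤ n) :
    ∑ j ∈ range n, chromaticBound 0 (j + 2) = (n + 2).choose 2 := by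
  induction n, hn using Nat.le_induction with
  | base => simp [chromaticBound]
  | succ n hn ih =>
    rw [sum_range_succ, ih, show chromaticBound 0 (n + 2) = n + 2 by simp [chromaticBound]; omega,
      Nat.choose_succ_succ' (n + 2), Nat.choose_one_right, add_comm]

lemma one_add_sum_range_chromaticBound_succ (q n : ℕ) :
    1 + ∑ j ∈ range n, chromaticBound (q + 1) (j + 2) =
      (n + 2 * q + 4).choose (2 * q + 4) + (n + 2 * q + 1).choose (2 * q + 2) := by
  have hb : ∀ j, chromaticBound (q + 1) (j + 2) =
      ((j + 1) + (2 * q + 3)).choose (2 * q + 3) + (j + (2 * q + 1)).choose (2 * q + 1) := by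
    intro j; simp only [chromaticBound]; congr 2 <;> omega
  have h1 : 1 + ∑ j ∈ range n, ((j + 1) + (2 * q + 3)).choose (2 * q + 3) =
      (n + 2 * q + 4).choose (2 * q + 4) := by
    have := sum_range_add_choose' (n + 1) (2 * q + 3)
    rw [sum_range_succ', zero_add, Nat.choose_self] at this
    rw [add_comm, this]
    congr 1; omega
  have h2 : ∑ j ∈ range n, (j + (2 * q + 1)).choose (2 * q + 1) =
      (n + 2 * q + 1).choose (2 * q + 2) := by
    rw [sum_range_add_choose', ← add_assoc]
  rw [sum_congr rfl fun j _ => hb j, sum_add_distrib, ← add_assoc, h1, h2]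

lemma one_add_sum_add_chromaticBound_le (p n : ℕ) :
    1 + ∑ j ∈ range n, chromaticBound p (j + 2) + chromaticBound (p + 1) n ≤
      chromaticBound (p + 1) (n + 1) := by
  match p, n with
  | 0, 0 => simp [chromaticBound]
  | 0, n + 1 =>
    have pascal : (n + 4).choose 3 = (n + 3).choose 2 + (n + 3).choose 3 :=
      Nat.choose_succ_succ' _ _
    rw [sum_range_chromaticBound_zero (by omega), chromaticBound_one, chromaticBound_one]
    simp only [show n + 1 + 1 + 2 = n + 4 by omega, show n + 1 + 2 = n + 3 by omega, pascal]
    omega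
  | q + 1, n =>
    have pascal₁ : (n + 2 * q + 5).choose (2 * q + 5) =
        (n + 2 * q + 4).choose (2 * q + 4) + (n + 2 * q + 4).choose (2 * q + 5) :=
      Nat.choose_succ_succ' _ _
    have pascal₂ : (n + 2 * q + 2).choose (2 * q + 3) =
        (n + 2 * q + 1).choose (2 * q + 2) + (n + 2 * q + 1).choose (2 * q + 3) :=
      Nat.choose_succ_succ' _ _
    rw [one_add_sum_range_chromaticBound_succ, chromaticBound_succ_succ, chromaticBound_succ_succ,
      show n + 1 + 2 * q + 4 = n + 2 * q + 5 by omega,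
      show n + 1 + 2 * q + 1 = n + 2 * q + 2 by omega, pascal₁, pascal₂]
    omega

lemma add_sum_range_mul_chromaticBound_le (p n : ℕ) :
    n + ∑ j ∈ range n, j * chromaticBound p (n - j + 1) ≤ chromaticBound (p + 1) n := by
  rw [← sum_range_reflect]
  induction n with
  | zero => simp
  | succ n ih =>
    have hpeel : ∑ j ∈ range (n + 1),
          (n + 1 - 1 - j) * chromaticBound p (n + 1 - (n + 1 - 1 - j) + 1) =
        ∑ j ∈ range n, (n - 1 - j) * chromaticBound p (n - (n - 1 - j) + 1) +
          ∑ j ∈ range n, chromaticBound p (j + 2) := by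
      rw [sum_range_succ, Nat.add_sub_cancel, Nat.sub_self, zero_mul, add_zero, ← sum_add_distrib]
      refine sum_congr rfl fun j hj => ?_
      have hj := mem_range.mp hj
      rw [show n + 1 - (n - j) + 1 = j + 2 by omega, show n - (n - 1 - j) + 1 = j + 2 by omega,
        show n - j = n - 1 - j + 1 by omega, add_one_mul]
    rw [hpeel]
    have := one_add_sum_add_chromaticBound_le p n
    omega

lemma exists_lt_forall_lt_imp_eq {α : Type*} [LinearOrder α] [WellFoundedLT α] {P : α → Prop}
    (h₀ : ∃ i, P i) (h₁ : ∀ w, ∃ i, P i ∧ i ≠ w) :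
    ∃ i j, i < j ∧ P i ∧ P j ∧ ∀ k < j, P k → k = i := by
  obtain ⟨i, hi, hmin_i⟩ := wellFounded_lt.has_min {i | P i} h₀
  obtain ⟨j, ⟨hj, hji⟩, hmin_j⟩ := wellFounded_lt.has_min {j | P j ∧ j ≠ i} (h₁ i)
  refine ⟨i, j, lt_of_le_of_ne (not_lt.mp (hmin_i j hj)) (Ne.symm hji), hi, hj,
    fun k hkj hk => ?_⟩
  by_contra hki
  exact hmin_j k ⟨hk, hki⟩ hkj

lemma Fin.sum_sigma_Iio {n : ℕ} (g : ℕ → ℕ) :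
    ∑ c : Σ j : Fin n, Iio j, g c.1 = ∑ j ∈ range n, j * g j := by
  rw [Fintype.sum_sigma, ← Fin.sum_univ_eq_sum_range (fun j => j * g j)]
  simp [Fin.card_Iio]

namespace SimpleGraph

variable {V W W' : Type*} {G : SimpleGraph V}

def Embedding.sumElim {H : SimpleGraph W} {H' : SimpleGraph W'} (f : H ↪g G) (g : H' ↪g G)
    (hfg : ∀ a b, f a ≠ g b ∧ ¬G.Adj (f a) (g b)) : H ⊕g H' ↪g G where
  toFun := Sum.elim f g
  inj' := by
    rintro (a | b) (a' | b') h
    · exact congrArg Sum.inl (f.injective h)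
    · exact ((hfg a b').1 h).elim
    · exact ((hfg a' b).1 h.symm).elim
    · exact congrArg Sum.inr (g.injective h)
  map_rel_iff' {x y} := by
    change G.Adj (Sum.elim f g x) (Sum.elim f g y) ↔ _
    rcases x with a | b <;> rcases y with a' | b'
    · simp
    · simpa using (hfg a b').2
    · simpa [G.adj_comm] using (hfg a' b).2
    · simp

def Embedding.ofAdj {u v : V} (huv : G.Adj u v) : (⊤ : SimpleGraph (Fin 2)) ↪g G where
  toFun := ![u, v]
  inj' := by
    intro i j h
    fin_cases i <;> fin_cases j <;> simp_all [huv.ne, huv.ne.symm]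
  map_rel_iff' {i j} := by
    change G.Adj (![u, v] i) (![u, v] j) ↔ _
    fin_cases i <;> fin_cases j <;> simp [huv, huv.symm]

def commonNonNeighbors (G : SimpleGraph V) (u v : V) : Set V := {w | ¬G.Adj u w ∧ ¬G.Adj v w}

lemma Adj.ne_of_mem_commonNonNeighbors {u v w : V} (huv : G.Adj u v)
    (hw : w ∈ G.commonNonNeighbors u v) : w ≠ u ∧ w ≠ v :=
  ⟨fun h => hw.2 (h ▸ huv.symm), fun h => hw.1 (h ▸ huv)⟩

lemma isEmpty_embedding_induce_of_isEmpty_sum_top {H : SimpleGraph W}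
    (h : IsEmpty (H ⊕g (⊤ : SimpleGraph (Fin 2)) ↪g G)) {u v : V} (huv : G.Adj u v)
    {S : Set V} (hS : S ⊆ G.commonNonNeighbors u v) : IsEmpty (H ↪g G.induce S) := by
  refine ⟨fun e => h.false (((Embedding.induce S).comp e).sumElim (Embedding.ofAdj huv) ?_)⟩
  intro a b
  have hmem := hS (e a).2
  have hne := huv.ne_of_mem_commonNonNeighbors hmem
  fin_cases b
  · exact ⟨hne.1, fun h => hmem.1 h.symm⟩
  · exact ⟨hne.2, fun h => hmem.2 h.symm⟩

lemma IsNClique.le_cliqueNum [Finite V] {n : ℕ} {s : Finset V} (hs : G.IsNClique n s) :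
    n ≤ G.cliqueNum :=
  hs.card_eq ▸ hs.isClique.card_le_cliqueNum

lemma IsNClique.exists_not_adj [Finite V] {K : Finset V} (hK : G.IsNClique G.cliqueNum K)
    (x : V) : ∃ k ∈ K, ¬G.Adj x k := by
  classical
  by_contra! h
  have := (hK.insert h).le_cliqueNum
  omega

lemma IsNClique.not_adj_of_forall_adj_erase [Finite V] {K : Finset V}
    (hK : G.IsNClique G.cliqueNum K) {u x y : V} (hu : u ∈ K)
    (hx : ∀ k ∈ K, k ≠ u → G.Adj x k) (hy : ∀ k ∈ K, k ≠ u → G.Adj y k) :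
    ¬G.Adj x y := by
  classical
  intro hxy
  have hK' := hK.insert_erase (a := y) (fun k hk => hy k (mem_sdiff.mp hk).1
    (by simpa using (mem_sdiff.mp hk).2)) hu
  obtain ⟨k, hk, hxk⟩ := hK'.exists_not_adj x
  rcases mem_insert.mp hk with rfl | hk
  · exact hxk hxy
  · exact hxk (hx k (mem_of_mem_erase hk) (ne_of_mem_erase hk))

lemma cliqueNum_induce_add_card_le [Finite V] {S : Set V} {B : Finset V}
    (hB : G.IsClique (B : Set V)) (hSB : ∀ x ∈ S, ∀ b ∈ B, G.Adj x b) :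
    (G.induce S).cliqueNum + #B ≤ G.cliqueNum := by
  classical
  obtain ⟨C, hC⟩ := (G.induce S).exists_isNClique_cliqueNum
  set C' := C.map (Function.Embedding.subtype S)
  have hC' : G.IsClique (C' : Set V) := by
    rw [coe_map]
    exact (hC.isClique.map (f := Function.Embedding.subtype S)).mono (map_comap_le _ _)
  have hdisj : Disjoint C' B := by
    refine Finset.disjoint_left.mpr fun x hx hxB => ?_
    obtain ⟨x', -, rfl⟩ := mem_map.mp hx
    exact G.loopless.irrefl _ (hSB _ x'.2 _ hxB)
  have hunion : G.IsClique ((C' ∪ B : Finset V) : Set V) := by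
    rw [coe_union, IsClique, Set.pairwise_union]
    refine ⟨hC', hB, fun x hx b hb _ => ?_⟩
    obtain ⟨x', -, rfl⟩ := mem_map.mp hx
    exact ⟨hSB _ x'.2 _ hb, (hSB _ x'.2 _ hb).symm⟩
  have := hunion.card_le_cliqueNum
  rwa [card_union_of_disjoint hdisj, card_map, hC.card_eq] at this

theorem colorable_sum_of_forall_exists_mem {ι : Type*} [Fintype ι] (S : ι → Set V)
    (hS : ∀ x, ∃ i, x ∈ S i) {k : ι → ℕ} (h : ∀ i, (G.induce (S i)).Colorable (k i)) :
    G.Colorable (∑ i, k i) := by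
  choose f hf using hS
  let c i := (h i).some
  have hvalid : ∀ {x y i j} (hx : x ∈ S i) (hy : y ∈ S j), G.Adj x y → i = j →
      HEq (c i ⟨x, hx⟩) (c j ⟨y, hy⟩) → False := by
    rintro x y i _ hx hy hxy rfl hc
    exact (c i).valid (show (G.induce (S i)).Adj ⟨x, hx⟩ ⟨y, hy⟩ from hxy) (eq_of_heq hc)
  have := (Coloring.mk (fun x => (⟨f x, c (f x) ⟨x, hf x⟩⟩ : Σ i, Fin (k i)))
    fun hxy heq => hvalid _ _ hxy (Sigma.mk.inj_iff.mp heq).1 (Sigma.mk.inj_iff.mp heq).2).colorable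
  simpa using this

section MaximumClique

variable (G) (K : Finset V)

noncomputable def cliqueVertex (i : Fin #K) : V := K.equivFin.symm i

def adjExceptSet (w : Fin #K) : Set V := {x | ∀ k ∈ K, k ≠ cliqueVertex K w → G.Adj x k}

def firstNonAdjSet (j i : Fin #K) : Set V :=
  {x | x ∈ G.commonNonNeighbors (cliqueVertex K i) (cliqueVertex K j) ∧
    ∀ k < j, k ≠ i → G.Adj x (cliqueVertex K k)}

variable {G K}

lemma cliqueVertex_mem (i : Fin #K) : cliqueVertex K i ∈ K := (K.equivFin.symm i).2

lemma cliqueVertex_injective : Function.Injective (cliqueVertex K) :=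
  fun _ _ h => K.equivFin.symm.injective (Subtype.ext h)

lemma exists_cliqueVertex_eq {k : V} (hk : k ∈ K) : ∃ i, cliqueVertex K i = k :=
  ⟨K.equivFin ⟨k, hk⟩, by simp [cliqueVertex]⟩

lemma IsNClique.exists_mem_adjExceptSet_or_firstNonAdjSet [Finite V]
    (hK : G.IsNClique G.cliqueNum K) (x : V) :
    (∃ w, x ∈ G.adjExceptSet K w) ∨ ∃ j i, i < j ∧ x ∈ G.firstNonAdjSet K j i := by
  by_cases hT : ∃ w, x ∈ G.adjExceptSet K w
  · exact .inl hT
  have h₀ : ∃ i, ¬G.Adj x (cliqueVertex K i) := by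
    obtain ⟨k, hk, hxk⟩ := hK.exists_not_adj x
    obtain ⟨i, rfl⟩ := exists_cliqueVertex_eq hk
    exact ⟨i, hxk⟩
  have h₁ w : ∃ i, ¬G.Adj x (cliqueVertex K i) ∧ i ≠ w := by
    simp only [adjExceptSet, Set.mem_ofPred_eq, not_exists, not_forall, exists_prop] at hT
    obtain ⟨_, hk, hkw, hxk⟩ := hT w
    obtain ⟨i, rfl⟩ := exists_cliqueVertex_eq hk
    exact ⟨i, hxk, fun h => hkw (h ▸ rfl)⟩
  obtain ⟨i, j, hij, hi, hj, hmin⟩ := exists_lt_forall_lt_imp_eq h₀ h₁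
  refine .inr ⟨j, i, hij, ⟨fun h => hi h.symm, fun h => hj h.symm⟩, fun k hkj hki => ?_⟩
  by_contra hxk
  exact hki (hmin k hkj hxk)

lemma IsNClique.cliqueNum_induce_firstNonAdjSet_le [Finite V] (hK : G.IsNClique G.cliqueNum K)
    {i j : Fin #K} (hij : i < j) :
    (G.induce (G.firstNonAdjSet K j i)).cliqueNum ≤ #K - j + 1 := by
  classical
  have hB := cliqueNum_induce_add_card_le (S := G.firstNonAdjSet K j i)
    (B := ((Iio j).erase i).image (cliqueVertex K))
    (hK.isClique.subset fun b hb => by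
      obtain ⟨k, -, rfl⟩ := mem_image.mp hb
      exact cliqueVertex_mem k)
    (fun x hx b hb => by
      obtain ⟨k, hk, rfl⟩ := mem_image.mp hb
      exact hx.2 k (mem_Iio.mp (mem_of_mem_erase hk)) (ne_of_mem_erase hk))
  rw [card_image_of_injective _ cliqueVertex_injective, card_erase_of_mem (mem_Iio.mpr hij),
    Fin.card_Iio, ← hK.card_eq] at hB
  have : (i : ℕ) < j := hij
  omega

end MaximumClique

theorem colorable_add_sum_of_colorable_induce_commonNonNeighbors [Finite V] {f : ℕ → ℕ}
    (hf : Monotone f) (h : ∀ u v, G.Adj u v → ∀ S ⊆ G.commonNonNeighbors u v,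
      (G.induce S).Colorable (f (G.induce S).cliqueNum)) :
    G.Colorable (G.cliqueNum + ∑ j ∈ range G.cliqueNum, j * f (G.cliqueNum - j + 1)) := by
  obtain ⟨K, hK⟩ := G.exists_isNClique_cliqueNum
  rw [← hK.card_eq]
  have hcover x : ∃ c, x ∈ Sum.elim (G.adjExceptSet K)
      (fun c : Σ j : Fin #K, Iio j => G.firstNonAdjSet K c.1 c.2) c := by
    rcases hK.exists_mem_adjExceptSet_or_firstNonAdjSet x with ⟨w, hw⟩ | ⟨j, i, hij, hx⟩
    · exact ⟨.inl w, hw⟩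
    · exact ⟨.inr ⟨j, i, mem_Iio.mpr hij⟩, hx⟩
  have := colorable_sum_of_forall_exists_mem _ hcover
    (k := Sum.elim (fun _ => 1) fun c => f (#K - c.1 + 1)) <| by
      rintro (w | ⟨j, i, hij⟩)
      · exact ⟨Coloring.mk (fun _ => (0 : Fin 1)) fun {x y} hxy _ =>
          hK.not_adj_of_forall_adj_erase (cliqueVertex_mem w) x.2 y.2 hxy⟩
      · have hij : i < j := mem_Iio.mp hij
        have hedge := hK.isClique (cliqueVertex_mem i) (cliqueVertex_mem j)
          (cliqueVertex_injective.ne hij.ne)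
        exact (h _ _ hedge _ fun x hx => hx.1).mono
          (hf (hK.cliqueNum_induce_firstNonAdjSet_le hij))
  simpa only [Fintype.sum_sum_type, Sum.elim_inl, Sum.elim_inr, sum_const, card_univ,
    Fintype.card_fin, smul_eq_mul, mul_one, Fin.sum_sigma_Iio fun j => f (#K - j + 1)] using this

end SimpleGraph

open SimpleGraph

def pK2SuccIso (q : ℕ) : pK2 (q + 1) ≃g pK2 q ⊕g (⊤ : SimpleGraph (Fin 2)) where
  toEquiv := (Equiv.prodCongr finSumFinEquiv.symm (Equiv.refl _)).trans
    ((Equiv.sumProdDistrib _ _ _).trans (Equiv.sumCongr (Equiv.refl _) (Equiv.uniqueProd _ _)))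
  map_rel_iff' := by
    rintro ⟨i, a⟩ ⟨j, b⟩
    induction i using Fin.lastCases <;> induction j using Fin.lastCases <;>
      simp [pK2, eq_comm, Fin.castSucc_ne_last]

def pK2OneIso : pK2 1 ≃g (⊤ : SimpleGraph (Fin 2)) where
  toEquiv := Equiv.uniqueProd _ _
  map_rel_iff' := by
    rintro ⟨i, a⟩ ⟨j, b⟩
    simp [pK2, Subsingleton.elim i j]

def pK2SuccSumDiamondIso (q : ℕ) :
    pK2 (q + 1) ⊕g diamond ≃g (pK2 q ⊕g diamond) ⊕g (⊤ : SimpleGraph (Fin 2)) :=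
  (Iso.sumCongr (pK2SuccIso q) .refl).trans <| Iso.sumAssoc.trans <|
    (Iso.sumCongr .refl Iso.sumComm).trans Iso.sumAssoc.symm

variable {V : Type*} {G : SimpleGraph V}

def diamondEmbedding {a b c d : V} (hab : ¬G.Adj a b) (hne : a ≠ b)
    (hac : G.Adj a c) (had : G.Adj a d) (hbc : G.Adj b c) (hbd : G.Adj b d)
    (hcd : G.Adj c d) : diamond ↪g G where
  toFun := ![a, b, c, d]
  inj' := by
    intro i j h
    fin_cases i <;> fin_cases j <;>
      simp_all [hac.ne, had.ne, hbc.ne, hbd.ne, hcd.ne, hac.ne.symm, had.ne.symm, hbc.ne.symm,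
        hbd.ne.symm, hcd.ne.symm, hne.symm]
  map_rel_iff' {i j} := by
    change G.Adj (![a, b, c, d] i) (![a, b, c, d] j) ↔ _
    fin_cases i <;> fin_cases j <;> simp [diamond, hab, hac, had, hbc, hbd, hcd, G.adj_comm]

lemma isEmpty_pK2_embedding_induce {q : ℕ} (h : IsEmpty (pK2 (q + 1) ↪g G)) {u v : V}
    (huv : G.Adj u v) {S : Set V} (hS : S ⊆ G.commonNonNeighbors u v) :
    IsEmpty (pK2 q ↪g G.induce S) :=
  isEmpty_embedding_induce_of_isEmpty_sum_top
    ⟨fun e => h.false (e.comp (pK2SuccIso q).toEmbedding)⟩ huv hS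

lemma isEmpty_pK2_sum_diamond_embedding_induce {q : ℕ}
    (h : IsEmpty (pK2 (q + 1) ⊕g diamond ↪g G)) {u v : V} (huv : G.Adj u v) {S : Set V}
    (hS : S ⊆ G.commonNonNeighbors u v) :
    IsEmpty (pK2 q ⊕g diamond ↪g G.induce S) :=
  isEmpty_embedding_induce_of_isEmpty_sum_top
    ⟨fun e => h.false (e.comp (pK2SuccSumDiamondIso q).toEmbedding)⟩ huv hS

lemma not_adj_of_mem_commonNonNeighbors (h : IsEmpty (pK2 2 ↪g G)) {u v x y : V}
    (huv : G.Adj u v) (hx : x ∈ G.commonNonNeighbors u v)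
    (hy : y ∈ G.commonNonNeighbors u v) : ¬G.Adj x y := by
  intro hxy
  have hS : ({x, y} : Set V) ⊆ G.commonNonNeighbors u v :=
    Set.insert_subset hx (by simpa using hy)
  exact (isEmpty_pK2_embedding_induce h huv hS).false <|
    (Embedding.ofAdj (G := G.induce {x, y}) (u := ⟨x, by simp⟩) (v := ⟨y, by simp⟩)
      hxy).comp pK2OneIso.toEmbedding

lemma not_induced_diamond (h : IsEmpty (pK2 0 ⊕g diamond ↪g G)) {a b c d : V}
    (hab : ¬G.Adj a b) (hne : a ≠ b) (hac : G.Adj a c) (had : G.Adj a d) (hbc : G.Adj b c)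
    (hbd : G.Adj b d) (hcd : G.Adj c d) : False :=
  h.false <| Embedding.sumElim (RelEmbedding.ofIsEmpty (pK2 0).Adj G.Adj)
    (diamondEmbedding hab hne hac had hbc hbd hcd) fun a => isEmptyElim a

theorem colorable_three_of_cliqueNum_le_two [Finite V] (h : IsEmpty (pK2 2 ↪g G))
    (hω : G.cliqueNum ≤ 2) : G.Colorable 3 := by
  classical
  have htriangle {a b c : V} (hab : G.Adj a b) (hac : G.Adj a c) (hbc : G.Adj b c) : False := by
    have := (is3Clique_triple_iff.mpr ⟨hab, hac, hbc⟩).le_cliqueNum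
    omega
  by_cases hE : ∃ u v, G.Adj u v
  swap
  · push Not at hE
    exact ⟨Coloring.mk (fun _ => 0) fun hxy _ => hE _ _ hxy⟩
  obtain ⟨u, v, huv⟩ := hE
  -- `N(u)` and `N(v) \ N(u)` are independent as `G` is triangle-free, the rest by `2K₂`-freeness.
  refine ⟨Coloring.mk (fun x => if G.Adj u x then 1 else if G.Adj v x then 0 else 2)
    fun {x y} hxy heq => ?_⟩
  by_cases hux : G.Adj u x <;> by_cases huy : G.Adj u y <;> by_cases hvx : G.Adj v x <;>
    by_cases hvy : G.Adj v y <;> simp only [hux, huy, hvx, hvy, if_true, if_false] at heq <;>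
    first
    | exact absurd heq (by decide)
    | exact htriangle hux huy hxy
    | exact htriangle hvx hvy hxy
    | exact not_adj_of_mem_commonNonNeighbors h huv ⟨hux, hvx⟩ ⟨huy, hvy⟩ hxy

theorem SimpleGraph.IsNClique.exists_forall_adj_eq_of_notMem [Finite V]
    (h₂ : IsEmpty (pK2 0 ⊕g diamond ↪g G)) {K : Finset V} (hK : G.IsNClique G.cliqueNum K)
    {x : V} (hx : x ∉ K) : ∃ u ∈ K, ∀ k ∈ K, G.Adj x k → k = u := by
  obtain ⟨w, hw, hxw⟩ := hK.exists_not_adj x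
  by_cases hN : ∃ a ∈ K, G.Adj x a
  · obtain ⟨a, ha, hxa⟩ := hN
    refine ⟨a, ha, fun b hb hxb => ?_⟩
    by_contra hba
    exact not_induced_diamond h₂ hxw (fun h => hx (h ▸ hw)) hxa hxb
      (hK.isClique hw ha fun h => hxw (h ▸ hxa)) (hK.isClique hw hb fun h => hxw (h ▸ hxb))
      (hK.isClique ha hb (Ne.symm hba))
  · push Not at hN
    exact ⟨w, hw, fun k hk hxk => (hN k hk hxk).elim⟩

theorem SimpleGraph.IsNClique.not_adj_of_forall_adj_eq [Finite V] (h₁ : IsEmpty (pK2 2 ↪g G))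
    {K : Finset V} (hK : G.IsNClique G.cliqueNum K) (hω : 3 ≤ G.cliqueNum) {u x y : V}
    (hu : u ∈ K) (hx : ∀ k ∈ K, G.Adj x k → k = u) (hy : ∀ k ∈ K, G.Adj y k → k = u) :
    ¬G.Adj x y := by
  classical
  obtain ⟨b, hb, c, hc, hbc⟩ := one_lt_card.mp <| show 1 < #(K.erase u) by
    rw [card_erase_of_mem hu, hK.card_eq]; omega
  have hmem {z} (hz : ∀ k ∈ K, G.Adj z k → k = u) : z ∈ G.commonNonNeighbors b c :=
    ⟨fun h => ne_of_mem_erase hb (hz b (mem_of_mem_erase hb) h.symm),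
      fun h => ne_of_mem_erase hc (hz c (mem_of_mem_erase hc) h.symm)⟩
  exact not_adj_of_mem_commonNonNeighbors h₁
    (hK.isClique (mem_of_mem_erase hb) (mem_of_mem_erase hc) hbc) (hmem hx) (hmem hy)

theorem colorable_cliqueNum_of_three_le [Finite V] (h₁ : IsEmpty (pK2 2 ↪g G))
    (h₂ : IsEmpty (pK2 0 ⊕g diamond ↪g G)) (hω : 3 ≤ G.cliqueNum) :
    G.Colorable G.cliqueNum := by
  classical
  obtain ⟨K, hK⟩ := G.exists_isNClique_cliqueNum
  choose a haK ha using fun x (hx : x ∉ K) => hK.exists_forall_adj_eq_of_notMem h₂ hx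
  have hrot (i : Fin #K) : finRotate #K i ≠ i := by
    rw [← Equiv.Perm.mem_support, support_finRotate_of_le (by rw [hK.card_eq]; omega)]
    exact mem_univ i
  rw [← hK.card_eq]
  refine ⟨Coloring.mk (fun x => if hx : x ∈ K then K.equivFin ⟨x, hx⟩
    else finRotate #K (K.equivFin ⟨a x hx, haK x hx⟩)) fun {x y} hxy heq => ?_⟩
  by_cases hx : x ∈ K <;> by_cases hy : y ∈ K <;>
    simp only [hx, hy, dite_true, dite_false] at heq
  · exact hxy.ne (congrArg Subtype.val (K.equivFin.injective heq))
  · rw [show (⟨x, hx⟩ : K) = ⟨a y hy, haK y hy⟩ from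
      Subtype.ext (ha y hy x hx hxy.symm)] at heq
    exact hrot _ heq.symm
  · rw [show (⟨y, hy⟩ : K) = ⟨a x hx, haK x hx⟩ from Subtype.ext (ha x hx y hy hxy)] at heq
    exact hrot _ heq
  · have he := congrArg Subtype.val (K.equivFin.injective ((finRotate _).injective heq))
    exact hK.not_adj_of_forall_adj_eq h₁ hω (haK x hx) (ha x hx)
      (fun k hk hyk => (ha y hy k hk hyk).trans he.symm) hxy

theorem colorable_max_cliqueNum_three [Finite V] (h₁ : IsEmpty (pK2 2 ↪g G))
    (h₂ : IsEmpty (pK2 0 ⊕g diamond ↪g G)) : G.Colorable (max G.cliqueNum 3) := by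
  rcases le_or_gt G.cliqueNum 2 with hω | hω
  · exact (colorable_three_of_cliqueNum_le_two h₁ hω).mono (le_max_right _ _)
  · exact (colorable_cliqueNum_of_three_le h₁ h₂ hω).mono (le_max_left _ _)

theorem colorable_chromaticBound : ∀ (p : ℕ) {V : Type*} [Finite V] {G : SimpleGraph V},
    IsEmpty (pK2 (p + 2) ↪g G) → IsEmpty (pK2 p ⊕g diamond ↪g G) →
      G.Colorable (chromaticBound p G.cliqueNum)
  | 0, _, _, _, h₁, h₂ => colorable_max_cliqueNum_three h₁ h₂
  | p + 1, _, _, _, h₁, h₂ =>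
    (colorable_add_sum_of_colorable_induce_commonNonNeighbors (chromaticBound_mono p)
      fun _ _ huv _ hS => colorable_chromaticBound p (isEmpty_pK2_embedding_induce h₁ huv hS)
        (isEmpty_pK2_sum_diamond_embedding_induce h₂ huv hS)).mono
      (add_sum_range_mul_chromaticBound_le p _)

theorem stmt_12 (p : ℕ) (hp : 1 ≤ p) (V : Type) [Fintype V] (G : SimpleGraph V)
    (h1 : IsEmpty (pK2 (p + 2) ↪g G))
    (h2 : IsEmpty ((pK2 p ⊕g diamond) ↪g G)) :
    G.chromaticNumber ≤
      ((Nat.choose (G.cliqueNum + 2 * p) (2 * p + 1) +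
        Nat.choose (G.cliqueNum + 2 * p - 3) (2 * p - 1) : ℕ) : ℕ∞) := by
  obtain ⟨q, rfl⟩ := Nat.exists_eq_add_of_le' hp
  exact (colorable_chromaticBound (q + 1) h1 h2).chromaticNumber_le
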